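/- Let P > 0, let u : ℝ → ℝ be four times continuously differentiable and periodic with period 2P, let λ, ν, k, μ, γ, η, Ĉ, D̂, U be real constants with ν ≠ 0, λ ≠ 0 and k ≠ 0, set A = λk²/ν, suppose for all θ both A·u'(θ)² = 2D̂ + 2Ĉ·u(θ) + U·u(θ)² − (1/3)u(θ)³ and A·u''(θ) = Ĉ + U·u(θ) − (1/2)u(θ)², and let d = (1/(2P))∫_{−P}^{P} u(θ) dθ. Then (1/(2P))∫_{−P}^{P} u(θ)·(μk²·u''(θ) + γk⁴·u''''(θ) + ηk²·(u²)''(θ)) dθ = −(μk² + 2Uηk²)·(2ν/(5λk²))·(3D̂ + 2Ĉd + U(Ĉ + Ud)) + (γk⁴ − (2λη/ν)k⁴)·(ν²/(7λ²k⁴))·(6D̂d + 8Ĉ² + U(−6D̂ + 6Ĉd + 2UĈ + 2U²d)). -/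

import Mathlib

/-!
Differentiating the second-integral relation twice gives `A u'''' = (U - u) u'' - u'²`, hence
the pointwise identity `u (u²)'' = 2U u u'' - 2A u u''''`, so the average splits into the averages
of `u u''` and `u u''''`. Modulo the two integral relations, `A u u''` and `A² u u''''` are each an
affine function of `u` plus the derivative of a periodic function `(a₂ u² + a₁ u + a₀) u'`, whose
coefficients are found by matching powers of `u`. Derivatives of periodic functions average to
zero, which leaves an affine expression in the mean `d`.
-/

open Function

theorem Function.Periodic.deriv {f : ℝ → ℝ} {c : ℝ} (h : Periodic f c) : Periodic (deriv f) c :=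
  fun x => by rw [← deriv_comp_add_const, funext h]

theorem intervalIntegral.integral_deriv_eq_zero_of_periodic {F : ℝ → ℝ} {a b : ℝ}
    (hF : ContDiff ℝ 1 F) (hper : Periodic F (b - a)) : ∫ x in a..b, deriv F x = 0 := by
  rw [integral_deriv_eq_sub (fun x _ => hF.differentiable one_ne_zero x)
    ((hF.continuous_deriv le_rfl).intervalIntegrable _ _), sub_eq_zero]
  simpa using hper a

theorem intervalIntegral.integral_eq_of_eq_add_deriv_of_periodic {u g F : ℝ → ℝ} {a b : ℝ}
    (c₀ c₁ : ℝ) (hu : Continuous u) (hF : ContDiff ℝ 1 F) (hper : Periodic F (b - a))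
    (hg : ∀ θ, g θ = c₀ + c₁ * u θ + deriv F θ) :
    ∫ θ in a..b, g θ = c₀ * (b - a) + c₁ * ∫ θ in a..b, u θ := by
  have hlin : IntervalIntegrable (fun θ => c₀ + c₁ * u θ) MeasureTheory.volume a b := by
    apply Continuous.intervalIntegrable; fun_prop
  rw [intervalIntegral.integral_congr fun θ _ => hg θ,
    intervalIntegral.integral_add hlin ((hF.continuous_deriv le_rfl).intervalIntegrable _ _),
    integral_deriv_eq_zero_of_periodic hF hper, add_zero,
    intervalIntegral.integral_add intervalIntegrable_const
      ((hu.intervalIntegrable a b).const_mul c₁),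
    intervalIntegral.integral_const, intervalIntegral.integral_const_mul, smul_eq_mul, mul_comm]

section CnoidalWave

variable {u : ℝ → ℝ}

theorem hasDerivAt_quadratic_mul_deriv (hu : ContDiff ℝ 2 u) (a₀ a₁ a₂ θ : ℝ) :
    HasDerivAt (fun s => (a₂ * u s ^ 2 + a₁ * u s + a₀) * deriv u s)
      ((2 * a₂ * u θ + a₁) * deriv u θ ^ 2 + (a₂ * u θ ^ 2 + a₁ * u θ + a₀) * deriv (deriv u) θ)
      θ := by
  have h₁ := (hu.differentiable (by norm_num) θ).hasDerivAt
  have h₂ := (hu.differentiable_deriv_two θ).hasDerivAt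
  exact ((((h₁.pow 2).const_mul a₂).add (h₁.const_mul a₁)).add_const a₀).mul h₂
    |>.congr_deriv (by simp only [Pi.add_apply, Pi.pow_apply]; push_cast; ring)

theorem contDiff_quadratic_mul_deriv (hu : ContDiff ℝ 2 u) (a₀ a₁ a₂ : ℝ) :
    ContDiff ℝ 1 (fun s => (a₂ * u s ^ 2 + a₁ * u s + a₀) * deriv u s) := by
  have : ContDiff ℝ 1 u := hu.of_le (by norm_num)
  have : ContDiff ℝ 1 (deriv u) := hu.deriv'
  fun_prop

theorem periodic_quadratic_mul_deriv {c : ℝ} (hper : Periodic u c) (a₀ a₁ a₂ : ℝ) :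
    Periodic (fun s => (a₂ * u s ^ 2 + a₁ * u s + a₀) * deriv u s) c := fun θ => by
  simp only [hper θ, hper.deriv θ]

variable {A C D U : ℝ}

theorem deriv_deriv_deriv_of_second_integral (hu : ContDiff ℝ 3 u)
    (hsecond : ∀ θ, A * deriv (deriv u) θ = C + U * u θ - 1 / 2 * u θ ^ 2) (θ : ℝ) :
    A * deriv (deriv (deriv u)) θ = (U - u θ) * deriv u θ := by
  have h₁ := (hu.differentiable (by norm_num) θ).hasDerivAt
  have h₃ : Differentiable ℝ (deriv (deriv u)) := by fun_prop
  have hlhs := (h₃ θ).hasDerivAt.const_mul A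
  rw [funext hsecond] at hlhs
  have hrhs := ((h₁.const_mul U).const_add C).sub ((h₁.pow 2).const_mul (1 / 2))
  rw [hlhs.unique hrhs]
  push_cast
  ring

theorem deriv_deriv_deriv_deriv_of_second_integral (hu : ContDiff ℝ 4 u)
    (hsecond : ∀ θ, A * deriv (deriv u) θ = C + U * u θ - 1 / 2 * u θ ^ 2) (θ : ℝ) :
    A * deriv (deriv (deriv (deriv u))) θ = (U - u θ) * deriv (deriv u) θ - deriv u θ ^ 2 := by
  have h₁ := (hu.differentiable (by norm_num) θ).hasDerivAt
  have h₂ : Differentiable ℝ (deriv u) := (hu.of_le (by norm_num)).differentiable_deriv_two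
  have h₄ : Differentiable ℝ (deriv (deriv (deriv u))) := by fun_prop
  have hlhs := (h₄ θ).hasDerivAt.const_mul A
  rw [funext (deriv_deriv_deriv_of_second_integral (hu.of_le (by norm_num)) hsecond)] at hlhs
  rw [hlhs.unique ((h₁.const_sub U).mul (h₂ θ).hasDerivAt)]
  ring

theorem deriv_deriv_sq (hu : ContDiff ℝ 2 u) (θ : ℝ) :
    deriv (deriv fun s => u s ^ 2) θ = 2 * deriv u θ ^ 2 + 2 * u θ * deriv (deriv u) θ := by
  have h₁ : Differentiable ℝ u := hu.differentiable (by norm_num)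
  have hsq : deriv (fun s => u s ^ 2) = fun s => 2 * u s * deriv u s := funext fun s => by
    exact ((h₁ s).hasDerivAt.pow 2).deriv.trans (by push_cast; ring)
  rw [hsq]
  exact (((h₁ θ).hasDerivAt.const_mul 2).mul (hu.differentiable_deriv_two θ).hasDerivAt).deriv.trans
    (by ring)


theorem mul_deriv_deriv_sq_of_second_integral (hu : ContDiff ℝ 4 u)
    (hsecond : ∀ θ, A * deriv (deriv u) θ = C + U * u θ - 1 / 2 * u θ ^ 2) (θ : ℝ) :
    u θ * deriv (deriv fun s => u s ^ 2) θ =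
      2 * U * (u θ * deriv (deriv u) θ) - 2 * A * (u θ * deriv (deriv (deriv (deriv u))) θ) := by
  rw [deriv_deriv_sq (hu.of_le (by norm_num))]
  linear_combination (2 * u θ) * deriv_deriv_deriv_deriv_of_second_integral hu hsecond θ

variable {a b : ℝ}

theorem integral_mul_deriv_deriv_of_cnoidal (hu : ContDiff ℝ 2 u) (hper : Periodic u (b - a))
    (hfirst : ∀ θ, A * deriv u θ ^ 2 = 2 * D + 2 * C * u θ + U * u θ ^ 2 - 1 / 3 * u θ ^ 3)
    (hsecond : ∀ θ, A * deriv (deriv u) θ = C + U * u θ - 1 / 2 * u θ ^ 2) :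
    A * ∫ θ in a..b, u θ * deriv (deriv u) θ =
      -(2 / 5) * ((3 * D + U * C) * (b - a) + (2 * C + U ^ 2) * ∫ θ in a..b, u θ) := by
  rw [← intervalIntegral.integral_const_mul,
    intervalIntegral.integral_eq_of_eq_add_deriv_of_periodic (-(2 / 5) * (3 * D + U * C))
      (-(2 / 5) * (2 * C + U ^ 2)) hu.continuous
      (contDiff_quadratic_mul_deriv hu (2 * A * U / 5) (3 * A / 5) 0)
      (periodic_quadratic_mul_deriv hper _ _ _) fun θ => ?_]
  · ring
  rw [(hasDerivAt_quadratic_mul_deriv hu _ _ _ θ).deriv]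
  linear_combination (2 / 5 * u θ - 2 / 5 * U) * hsecond θ - 3 / 5 * hfirst θ

theorem integral_mul_deriv_deriv_deriv_deriv_of_cnoidal (hu : ContDiff ℝ 4 u) (hper : Periodic u (b - a))
    (hfirst : ∀ θ, A * deriv u θ ^ 2 = 2 * D + 2 * C * u θ + U * u θ ^ 2 - 1 / 3 * u θ ^ 3)
    (hsecond : ∀ θ, A * deriv (deriv u) θ = C + U * u θ - 1 / 2 * u θ ^ 2) :
    A ^ 2 * ∫ θ in a..b, u θ * deriv (deriv (deriv (deriv u))) θ =
      1 / 7 * ((8 * C ^ 2 - 6 * U * D + 2 * U ^ 2 * C) * (b - a) +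
        (6 * D + 6 * U * C + 2 * U ^ 3) * ∫ θ in a..b, u θ) := by
  have hu₂ : ContDiff ℝ 2 u := hu.of_le (by norm_num)
  rw [← intervalIntegral.integral_const_mul,
    intervalIntegral.integral_eq_of_eq_add_deriv_of_periodic
      (1 / 7 * (8 * C ^ 2 - 6 * U * D + 2 * U ^ 2 * C)) (1 / 7 * (6 * D + 6 * U * C + 2 * U ^ 3))
      hu.continuous
      (contDiff_quadratic_mul_deriv hu₂ (-A * (8 * C + 2 * U ^ 2) / 7) (3 * A * U / 7) (-5 * A / 7))
      (periodic_quadratic_mul_deriv hper _ _ _) fun θ => ?_]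
  · ring
  rw [(hasDerivAt_quadratic_mul_deriv hu₂ _ _ _ θ).deriv]
  linear_combination (A * u θ) * deriv_deriv_deriv_deriv_of_second_integral hu hsecond θ +
    (u θ * (U - u θ) + (5 * u θ ^ 2 - 3 * U * u θ + 8 * C + 2 * U ^ 2) / 7) * hsecond θ +
    (3 * u θ - 3 * U) / 7 * hfirst θ

end CnoidalWave

/-- The period-average of `u · (μk² u'' + γk⁴ u'''' + ηk² (u²)'')` for a `C⁴`
periodic cnoidal wave satisfying the first- and second-integral relations,
expressed via `Ĉ, D̂, U` and the mean value `d`. -/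
theorem stmt_7 (P : ℝ) (hP : 0 < P) (u : ℝ → ℝ)
    (lam nu k mu gam eta C D U d : ℝ)
    (hnu : nu ≠ 0) (hlam : lam ≠ 0) (hk : k ≠ 0)
    (hu : ContDiff ℝ 4 u) (hper : Function.Periodic u (2 * P))
    (A : ℝ) (hA : A = lam * k ^ 2 / nu)
    (hfirst : ∀ θ : ℝ, A * (deriv u θ) ^ 2 =
      2 * D + 2 * C * u θ + U * (u θ) ^ 2 - (1 / 3) * (u θ) ^ 3)
    (hsecond : ∀ θ : ℝ, A * deriv (deriv u) θ = C + U * u θ - (1 / 2) * (u θ) ^ 2)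
    (hd : d = (1 / (2 * P)) * ∫ θ in (-P)..P, u θ) :
    (1 / (2 * P)) * ∫ θ in (-P)..P, u θ *
        (mu * k ^ 2 * deriv (deriv u) θ +
          gam * k ^ 4 * deriv (deriv (deriv (deriv u))) θ +
          eta * k ^ 2 * deriv (deriv (fun s => (u s) ^ 2)) θ) =
      -(mu * k ^ 2 + 2 * U * eta * k ^ 2) * (2 * nu / (5 * lam * k ^ 2)) *
          (3 * D + 2 * C * d + U * (C + U * d)) +
        (gam * k ^ 4 - (2 * lam * eta / nu) * k ^ 4) *
          (nu ^ 2 / (7 * lam ^ 2 * k ^ 4)) *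
          (6 * D * d + 8 * C ^ 2 +
            U * (-6 * D + 6 * C * d + 2 * U * C + 2 * U ^ 2 * d)) := by
  have hP₀ : P ≠ 0 := hP.ne'
  have hA₀ : A ≠ 0 := hA ▸ div_ne_zero (mul_ne_zero hlam (pow_ne_zero 2 hk)) hnu
  have hper' : Periodic u (P - -P) := by rwa [sub_neg_eq_add, ← two_mul]
  have h₂ := integral_mul_deriv_deriv_of_cnoidal (hu.of_le (by norm_num)) hper' hfirst hsecond
  have h₄ := integral_mul_deriv_deriv_deriv_deriv_of_cnoidal hu hper' hfirst hsecond
  have hc₂ : Continuous (deriv (deriv u)) := by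
    simpa [iteratedDeriv_eq_iterate] using hu.continuous_iteratedDeriv 2 (by norm_num)
  have hc₄ : Continuous (deriv (deriv (deriv (deriv u)))) := by
    simpa [iteratedDeriv_eq_iterate] using hu.continuous_iteratedDeriv 4 le_rfl
  have hsplit : ∫ θ in (-P)..P, u θ *
        (mu * k ^ 2 * deriv (deriv u) θ +
          gam * k ^ 4 * deriv (deriv (deriv (deriv u))) θ +
          eta * k ^ 2 * deriv (deriv (fun s => (u s) ^ 2)) θ) =
      (mu * k ^ 2 + 2 * U * eta * k ^ 2) * (∫ θ in (-P)..P, u θ * deriv (deriv u) θ) +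
        (gam * k ^ 4 - 2 * A * eta * k ^ 2) *
          ∫ θ in (-P)..P, u θ * deriv (deriv (deriv (deriv u))) θ := by
    rw [← intervalIntegral.integral_const_mul, ← intervalIntegral.integral_const_mul,
      ← intervalIntegral.integral_add (by apply Continuous.intervalIntegrable; fun_prop)
        (by apply Continuous.intervalIntegrable; fun_prop)]
    refine intervalIntegral.integral_congr fun θ _ => ?_
    linear_combination eta * k ^ 2 * mul_deriv_deriv_sq_of_second_integral hu hsecond θ
  have hmean : ∫ θ in (-P)..P, u θ = 2 * P * d := by
    rw [hd]
    field_simp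
  rw [hsplit, eq_div_of_mul_eq hA₀ ((mul_comm _ _).trans h₂),
    eq_div_of_mul_eq (pow_ne_zero 2 hA₀) ((mul_comm _ _).trans h₄), hmean, hA]
  field_simp
  ring
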